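/- The number of n-permutations avoiding the POP P_4 (poset on {1,2,3,4} with 1 > 3) equals n·F(n). Moreover, for n ≥ 4, Av_n(P_4) is the disjoint union of: {1 ⊕ σ : σ ∈ Av_{n-1}(P_4)}, {21 ⊕ σ : σ ∈ Av_{n-2}(P_4)}, {σ ⊖ 1 : σ ∈ Av_{n-1}(P_3)}, and {3142[1,1,σ,1] : σ ∈ Av_{n-3}(P_3)}. -/

import Mathlib

/-- `π` avoids the POP `P_3` (poset on `{1,2,3}` with `1 > 3`). -/
def AvoidsP3 {n : ℕ} (π : Equiv.Perm (Fin n)) : Prop :=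
  ¬ ∃ i j k : Fin n, i < j ∧ j < k ∧ π k < π i

/-- `π` avoids the POP `P_4` (poset on `{1,2,3,4}` with `1 > 3`): there are no
positions `i < j < k < l` with `π i > π k`. -/
def AvoidsP4 {n : ℕ} (π : Equiv.Perm (Fin n)) : Prop :=
  ¬ ∃ i j k l : Fin n, i < j ∧ j < k ∧ k < l ∧ π k < π i

/-- `π = 1 ⊕ σ` for some `σ ∈ Av_{n-1}(P_4)`. -/
def InA (n : ℕ) (π : Equiv.Perm (Fin n)) : Prop :=
  ∃ σ : Equiv.Perm (Fin (n - 1)), AvoidsP4 σ ∧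
    (∀ h : 0 < n, (π ⟨0, h⟩ : ℕ) = 0) ∧
    ∀ (i : Fin (n - 1)) (h : (i : ℕ) + 1 < n), (π ⟨(i : ℕ) + 1, h⟩ : ℕ) = (σ i : ℕ) + 1

/-- `π = 21 ⊕ σ` for some `σ ∈ Av_{n-2}(P_4)`. -/
def InB (n : ℕ) (π : Equiv.Perm (Fin n)) : Prop :=
  ∃ σ : Equiv.Perm (Fin (n - 2)), AvoidsP4 σ ∧
    (∀ h : 0 < n, (π ⟨0, h⟩ : ℕ) = 1) ∧ (∀ h : 1 < n, (π ⟨1, h⟩ : ℕ) = 0) ∧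
    ∀ (i : Fin (n - 2)) (h : (i : ℕ) + 2 < n), (π ⟨(i : ℕ) + 2, h⟩ : ℕ) = (σ i : ℕ) + 2

/-- `π = σ ⊖ 1` for some `σ ∈ Av_{n-1}(P_3)`. -/
def InC (n : ℕ) (π : Equiv.Perm (Fin n)) : Prop :=
  ∃ σ : Equiv.Perm (Fin (n - 1)), AvoidsP3 σ ∧
    (∀ h : n - 1 < n, (π ⟨n - 1, h⟩ : ℕ) = 0) ∧
    ∀ (i : Fin (n - 1)) (h : (i : ℕ) < n), (π ⟨(i : ℕ), h⟩ : ℕ) = (σ i : ℕ) + 1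

/-- `π = 3142[1, 1, σ, 1]` for some `σ ∈ Av_{n-3}(P_3)`. -/
def InD (n : ℕ) (π : Equiv.Perm (Fin n)) : Prop :=
  ∃ σ : Equiv.Perm (Fin (n - 3)), AvoidsP3 σ ∧
    (∀ h : 0 < n, (π ⟨0, h⟩ : ℕ) = 2) ∧ (∀ h : 1 < n, (π ⟨1, h⟩ : ℕ) = 0) ∧
    (∀ h : n - 1 < n, (π ⟨n - 1, h⟩ : ℕ) = 1) ∧
    ∀ (i : Fin (n - 3)) (h : (i : ℕ) + 2 < n), (π ⟨(i : ℕ) + 2, h⟩ : ℕ) = (σ i : ℕ) + 3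

/-!
Avoiding `P_3` means `π i < π k` whenever `k ≥ i + 2`, and avoiding `P_4` means the same for the
pairs with `k ≤ n - 2`. So in a `P_4`-avoider `π 0` is smaller than every entry at the positions
`2, …, n - 2`: the value `0` sits at position `0`, `1` or `n - 1`, and following where `1` and `2`
can then sit leaves exactly the shapes `1 ⊕ σ`, `21 ⊕ σ`, `σ ⊖ 1` and `3142[1,1,σ,1]`. In each shape
`π` is determined by `σ`; in the first two the condition on `π` is the `P_4` condition on `σ`, and
in the last two the block ends at position `n - 2`, so the `P_4` condition constrains all of it and
becomes `P_3`-avoidance of `σ`. The same argument splits `Av_n(P_3)` into `1 ⊕ Av_{n-1}(P_3)` and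
`21 ⊕ Av_{n-2}(P_3)`, so `|Av_n(P_3)| = F(n+1)`, and then
`|Av_n(P_4)| = (n-1)F(n-1) + (n-2)F(n-2) + F(n) + F(n-2) = n F(n)`.
-/

open Equiv

variable {n m : ℕ}

def GapIncreasing (t : ℕ) (π : Perm (Fin n)) : Prop :=
  ∀ i k : Fin n, (i : ℕ) + 2 ≤ k → (k : ℕ) + t < n → π i < π k

theorem not_exists_inversion_iff_gapIncreasing (t : ℕ) (π : Perm (Fin n)) :
    (¬ ∃ i j k : Fin n, i < j ∧ j < k ∧ (k : ℕ) + t < n ∧ π k < π i) ↔ GapIncreasing t π := by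
  constructor
  · intro h i k hik hk
    refine lt_of_le_of_ne (not_lt.1 fun hlt => h ⟨i, ⟨i + 1, by omega⟩, k, ?_, ?_, hk, hlt⟩)
      (π.injective.ne (Fin.ne_of_val_ne (by omega)))
    all_goals simp only [Fin.lt_def]; omega
  · rintro h ⟨i, j, k, hij, hjk, hk, hlt⟩
    rw [Fin.lt_def] at hij hjk
    exact lt_asymm hlt (h i k (by omega) hk)

theorem avoidsP3_iff_gapIncreasing (π : Perm (Fin n)) : AvoidsP3 π ↔ GapIncreasing 0 π := by
  simp [← not_exists_inversion_iff_gapIncreasing, AvoidsP3]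

theorem avoidsP4_iff_gapIncreasing (π : Perm (Fin n)) : AvoidsP4 π ↔ GapIncreasing 1 π := by
  have hlast (k : Fin n) : (∃ l : Fin n, k < l) ↔ (k : ℕ) + 1 < n :=
    ⟨fun ⟨l, hl⟩ => by rw [Fin.lt_def] at hl; omega, fun h => ⟨⟨k + 1, h⟩, by simp [Fin.lt_def]⟩⟩
  simp only [← not_exists_inversion_iff_gapIncreasing, AvoidsP4, ← hlast, exists_and_left,
    exists_and_right]

theorem gapIncreasing_of_le {t : ℕ} (h : n ≤ t + 2) (π : Perm (Fin n)) : GapIncreasing t π :=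
  fun _ k hk hkn => absurd hkn (by omega)

def HasBlock (c r : ℕ) (π : Perm (Fin n)) (σ : Perm (Fin m)) : Prop :=
  ∀ (i : Fin m) (h : (i : ℕ) + c < n), (π ⟨i + c, h⟩ : ℕ) = σ i + r

namespace HasBlock

variable {c r : ℕ} {π π' : Perm (Fin n)} {σ σ' : Perm (Fin m)}

theorem apply_eq (hb : HasBlock c r π σ) {j : Fin n} {i : Fin m} (hji : (j : ℕ) = i + c) :
    (π j : ℕ) = σ i + r := by
  obtain ⟨j, hj⟩ := j
  dsimp only at hji
  subst hji
  exact hb i hj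

theorem unique (hb : HasBlock c r π σ) (hb' : HasBlock c r π σ') (hcm : c + m ≤ n) : σ = σ' :=
  Equiv.ext fun i => Fin.ext (by have := hb i (by omega); have := hb' i (by omega); omega)

theorem eq_of_apply_eq_off_block (hb : HasBlock c r π σ) (hb' : HasBlock c r π' σ)
    (hoff : ∀ j : Fin n, (j : ℕ) < c ∨ c + m ≤ j → (π j : ℕ) = π' j) : π = π' := by
  ext j
  by_cases hj : (j : ℕ) < c ∨ c + m ≤ j
  · exact hoff j hj
  · rw [hb.apply_eq (i := ⟨j - c, by omega⟩) (by dsimp only; omega),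
      hb'.apply_eq (i := ⟨j - c, by omega⟩) (by dsimp only; omega)]

theorem gapIncreasing_iff {t s : ℕ} (hb : HasBlock c r π σ) (hc : c ≤ 2) (hst : s ≤ t)
    (hlen : c + m + t = n + s) (hfront : ∀ j : Fin n, (j : ℕ) < c → (π j : ℕ) < r) :
    GapIncreasing t π ↔ GapIncreasing s σ := by
  -- by `hc` and `hlen`, a position `k ≥ 2` has `k + t < n` iff it lies in the block and
  -- `(k - c) + s < m`
  constructor
  · intro hπ i k hik hk
    have := hπ ⟨i + c, by omega⟩ ⟨k + c, by omega⟩ (by dsimp only; omega) (by dsimp only; omega)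
    rw [Fin.lt_def, hb, hb] at this
    rw [Fin.lt_def]; omega
  · intro hσ i k hik hk
    have hk' := hb.apply_eq (i := ⟨k - c, by omega⟩) (j := k) (by dsimp only; omega)
    rw [Fin.lt_def, hk']
    by_cases hi : (i : ℕ) < c
    · have := hfront i hi; omega
    · have := hσ ⟨i - c, by omega⟩ ⟨k - c, by omega⟩ (by dsimp only; omega) (by dsimp only; omega)
      rw [Fin.lt_def] at this
      rw [hb.apply_eq (i := ⟨i - c, by omega⟩) (by dsimp only; omega)]; omega

theorem mul_left {d : ℕ} (hb : HasBlock c r π σ) (ρ : Perm (Fin n))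
    (hρ : ∀ v : Fin n, r ≤ v → v < r + m → (ρ v : ℕ) = v + d) : HasBlock c (r + d) (ρ * π) σ :=
  fun i h => by
    rw [Perm.mul_apply, hρ _ (by rw [hb]; omega) (by rw [hb]; omega), hb, add_assoc]

theorem trans {k c' r' : ℕ} {τ : Perm (Fin k)} (hb : HasBlock c r π τ) (hb' : HasBlock c' r' τ σ)
    (hk : n ≤ c + k) : HasBlock (c' + c) (r' + r) π σ := fun i h => by
  rw [hb.apply_eq (i := ⟨i + c', by omega⟩) (by dsimp only; omega), hb' i (by omega)]; omega

end HasBlock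

theorem exists_hasBlock {c r : ℕ} (π : Perm (Fin n)) (hcm : c + m ≤ n) (hrm : r + m = n)
    (hsmall : ∀ j : Fin n, (π j : ℕ) < r → (j : ℕ) < c ∨ c + m ≤ j) :
    ∃ σ : Perm (Fin m), HasBlock c r π σ := by
  have hr (i : Fin m) : r ≤ (π ⟨i + c, by omega⟩ : ℕ) := by
    by_contra h
    have := hsmall ⟨i + c, by omega⟩ (by omega)
    dsimp only at this
    omega
  let f (i : Fin m) : Fin m :=
    ⟨π ⟨i + c, by omega⟩ - r, by have := (π ⟨i + c, by omega⟩).isLt; have := i.isLt; omega⟩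
  have hf : f.Injective := fun a b hab => by
    have hab' : (π ⟨a + c, by omega⟩ : ℕ) = π ⟨b + c, by omega⟩ := by
      have := congrArg Fin.val hab
      have := hr a
      have := hr b
      simp only [f] at *
      omega
    have := congrArg Fin.val (π.injective (Fin.ext hab'))
    simp only [add_left_inj] at this
    exact Fin.ext this
  exact ⟨Equiv.ofBijective f hf.bijective_of_finite, fun i h => by
    have := hr i; simp only [ofBijective_apply, f]; omega⟩

noncomputable def blockPerm (c : ℕ) (h : m + c ≤ n) (σ : Perm (Fin m)) : Perm (Fin n) :=
  σ.viaFintypeEmbedding ((Fin.addNatEmb c).trans (Fin.castLEEmb h))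

theorem hasBlock_blockPerm (c : ℕ) (h : m + c ≤ n) (σ : Perm (Fin m)) :
    HasBlock c c (blockPerm c h σ) σ := fun i hi => by
  rw [blockPerm, show (⟨i + c, hi⟩ : Fin n) = (Fin.addNatEmb c).trans (Fin.castLEEmb h) i from rfl,
    Perm.viaFintypeEmbedding_apply_image]
  rfl

theorem blockPerm_apply_off_block (c : ℕ) (h : m + c ≤ n) (σ : Perm (Fin m)) {j : Fin n}
    (hj : (j : ℕ) < c ∨ m + c ≤ j) : blockPerm c h σ j = j :=
  Perm.viaFintypeEmbedding_apply_notMem_range σ _ fun ⟨i, hi⟩ => by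
    rw [← hi] at hj
    simp only [Function.Embedding.trans_apply, Fin.addNatEmb_apply, Fin.castLEEmb_apply,
      Fin.val_castLE, Fin.val_addNat] at hj
    omega

theorem val_apply_ne_val_apply (π : Perm (Fin n)) {a b : Fin n} (h : (a : ℕ) ≠ b) :
    (π a : ℕ) ≠ π b :=
  Fin.val_ne_of_ne (π.injective.ne (Fin.ne_of_val_ne h))

-- These relations are stated so that `InA n π` unfolds to `∃ σ, AvoidsP4 σ ∧ IsOneDirectSum π σ`,
-- and likewise for `InB`, `InC` and `InD`.
def IsOneDirectSum (π : Perm (Fin n)) (σ : Perm (Fin m)) : Prop :=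
  (∀ h : 0 < n, (π ⟨0, h⟩ : ℕ) = 0) ∧ HasBlock 1 1 π σ

def IsTwoOneDirectSum (π : Perm (Fin n)) (σ : Perm (Fin m)) : Prop :=
  (∀ h : 0 < n, (π ⟨0, h⟩ : ℕ) = 1) ∧ (∀ h : 1 < n, (π ⟨1, h⟩ : ℕ) = 0) ∧ HasBlock 2 2 π σ

def IsSkewSumOne (π : Perm (Fin n)) (σ : Perm (Fin m)) : Prop :=
  (∀ h : n - 1 < n, (π ⟨n - 1, h⟩ : ℕ) = 0) ∧ HasBlock 0 1 π σ

def IsInflation3142 (π : Perm (Fin n)) (σ : Perm (Fin m)) : Prop :=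
  (∀ h : 0 < n, (π ⟨0, h⟩ : ℕ) = 2) ∧ (∀ h : 1 < n, (π ⟨1, h⟩ : ℕ) = 0) ∧
    (∀ h : n - 1 < n, (π ⟨n - 1, h⟩ : ℕ) = 1) ∧ HasBlock 2 3 π σ

variable {π π' : Perm (Fin n)} {σ : Perm (Fin m)}

namespace IsOneDirectSum

theorem gapIncreasing_iff {t : ℕ} (h : IsOneDirectSum π σ) (hm : m + 1 = n) :
    GapIncreasing t π ↔ GapIncreasing t σ :=
  h.2.gapIncreasing_iff (by norm_num) le_rfl (by omega) fun ⟨j, hj⟩ hj1 => by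
    obtain rfl : j = 0 := by dsimp only at hj1; omega
    simp [h.1 hj]

theorem eq (h : IsOneDirectSum π σ) (h' : IsOneDirectSum π' σ) (hm : m + 1 = n) : π = π' :=
  h.2.eq_of_apply_eq_off_block h'.2 fun ⟨j, hj⟩ hoff => by
    obtain rfl : j = 0 := by dsimp only at hoff; omega
    rw [h.1 hj, h'.1 hj]

end IsOneDirectSum

theorem exists_isOneDirectSum (hn : 0 < n) (h0 : (π ⟨0, hn⟩ : ℕ) = 0) :
    ∃ σ : Perm (Fin (n - 1)), IsOneDirectSum π σ := by
  obtain ⟨σ, hσ⟩ := exists_hasBlock (c := 1) (r := 1) (m := n - 1) π (by omega) (by omega)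
    fun j hj => by
      have := val_apply_ne_val_apply π (a := j) (b := ⟨0, hn⟩)
      simp only [h0] at this
      omega
  exact ⟨σ, fun _ => h0, hσ⟩

theorem existsUnique_isOneDirectSum (σ : Perm (Fin m)) :
    ∃! π : Perm (Fin (m + 1)), IsOneDirectSum π σ := by
  have hπ : IsOneDirectSum (blockPerm 1 le_rfl σ) σ :=
    ⟨fun _ => by rw [blockPerm_apply_off_block _ _ _ (by simp)], hasBlock_blockPerm 1 le_rfl σ⟩
  exact ⟨_, hπ, fun _ h => h.eq hπ rfl⟩

namespace IsTwoOneDirectSum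

theorem gapIncreasing_iff {t : ℕ} (h : IsTwoOneDirectSum π σ) (hm : m + 2 = n) :
    GapIncreasing t π ↔ GapIncreasing t σ :=
  h.2.2.gapIncreasing_iff le_rfl le_rfl (by omega) fun ⟨j, hj⟩ hj2 => by
    obtain rfl | rfl : j = 0 ∨ j = 1 := by dsimp only at hj2; omega
    · simp [h.1 hj]
    · simp [h.2.1 hj]

theorem eq (h : IsTwoOneDirectSum π σ) (h' : IsTwoOneDirectSum π' σ) (hm : m + 2 = n) :
    π = π' :=
  h.2.2.eq_of_apply_eq_off_block h'.2.2 fun ⟨j, hj⟩ hoff => by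
    obtain rfl | rfl : j = 0 ∨ j = 1 := by dsimp only at hoff; omega
    · rw [h.1 hj, h'.1 hj]
    · rw [h.2.1 hj, h'.2.1 hj]

end IsTwoOneDirectSum

theorem exists_isTwoOneDirectSum (hn : 1 < n) (h0 : (π ⟨0, by omega⟩ : ℕ) = 1)
    (h1 : (π ⟨1, hn⟩ : ℕ) = 0) : ∃ σ : Perm (Fin (n - 2)), IsTwoOneDirectSum π σ := by
  obtain ⟨σ, hσ⟩ := exists_hasBlock (c := 2) (r := 2) (m := n - 2) π (by omega) (by omega)
    fun j hj => by
      have := val_apply_ne_val_apply π (a := j) (b := ⟨0, by omega⟩)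
      have := val_apply_ne_val_apply π (a := j) (b := ⟨1, hn⟩)
      simp only [h0, h1] at *
      omega
  exact ⟨σ, fun _ => h0, fun _ => h1, hσ⟩

theorem existsUnique_isTwoOneDirectSum (σ : Perm (Fin m)) :
    ∃! π : Perm (Fin (m + 2)), IsTwoOneDirectSum π σ := by
  have hπ : IsTwoOneDirectSum (swap ⟨0, by omega⟩ ⟨1, by omega⟩ * blockPerm 2 le_rfl σ) σ := by
    refine ⟨fun _ => ?_, fun _ => ?_,
      (hasBlock_blockPerm 2 le_rfl σ).mul_left (d := 0) _ fun v hv _ => ?_⟩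
    · rw [Perm.mul_apply, blockPerm_apply_off_block _ _ _ (by simp), swap_apply_left]
    · rw [Perm.mul_apply, blockPerm_apply_off_block _ _ _ (by simp), swap_apply_right]
    · rw [swap_apply_of_ne_of_ne (x := v) (Fin.ne_of_val_ne (by dsimp only; omega))
        (Fin.ne_of_val_ne (by dsimp only; omega)), add_zero]
  exact ⟨_, hπ, fun _ h => h.eq hπ rfl⟩

namespace IsSkewSumOne

theorem gapIncreasing_iff (h : IsSkewSumOne π σ) (hm : m + 1 = n) :
    GapIncreasing 1 π ↔ GapIncreasing 0 σ :=
  h.2.gapIncreasing_iff (by norm_num) zero_le_one (by omega) fun _ hj => absurd hj (by omega)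

theorem eq (h : IsSkewSumOne π σ) (h' : IsSkewSumOne π' σ) (hm : m + 1 = n) : π = π' :=
  h.2.eq_of_apply_eq_off_block h'.2 fun ⟨j, hj⟩ hoff => by
    obtain rfl : j = n - 1 := by dsimp only at hoff; omega
    rw [h.1 hj, h'.1 hj]

end IsSkewSumOne

theorem exists_isSkewSumOne (hn : 0 < n) (hl : (π ⟨n - 1, by omega⟩ : ℕ) = 0) :
    ∃ σ : Perm (Fin (n - 1)), IsSkewSumOne π σ := by
  obtain ⟨σ, hσ⟩ := exists_hasBlock (c := 0) (r := 1) (m := n - 1) π (by omega) (by omega)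
    fun j hj => by
      have := val_apply_ne_val_apply π (a := j) (b := ⟨n - 1, by omega⟩)
      simp only [hl] at this
      omega
  exact ⟨σ, fun _ => hl, hσ⟩

theorem existsUnique_isSkewSumOne (σ : Perm (Fin m)) :
    ∃! π : Perm (Fin (m + 1)), IsSkewSumOne π σ := by
  have hπ : IsSkewSumOne (finRotate (m + 1) * blockPerm 0 le_self_add σ) σ := by
    refine ⟨fun _ => ?_, (hasBlock_blockPerm 0 le_self_add σ).mul_left (d := 1) _ fun v _ hv => ?_⟩
    · rw [Perm.mul_apply, blockPerm_apply_off_block _ _ _ (by simp)]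
      exact congrArg Fin.val finRotate_last'
    · exact coe_finRotate_of_ne_last (Fin.ne_of_val_ne (by rw [Fin.val_last]; omega))
  exact ⟨_, hπ, fun _ h => h.eq hπ rfl⟩

namespace IsInflation3142

theorem gapIncreasing_iff (h : IsInflation3142 π σ) (hm : m + 3 = n) :
    GapIncreasing 1 π ↔ GapIncreasing 0 σ :=
  h.2.2.2.gapIncreasing_iff le_rfl zero_le_one (by omega) fun ⟨j, hj⟩ hj2 => by
    obtain rfl | rfl : j = 0 ∨ j = 1 := by dsimp only at hj2; omega
    · simp [h.1 hj]
    · simp [h.2.1 hj]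

theorem eq (h : IsInflation3142 π σ) (h' : IsInflation3142 π' σ) (hm : m + 3 = n) : π = π' :=
  h.2.2.2.eq_of_apply_eq_off_block h'.2.2.2 fun ⟨j, hj⟩ hoff => by
    obtain rfl | rfl | rfl : j = 0 ∨ j = 1 ∨ j = n - 1 := by dsimp only at hoff; omega
    · rw [h.1 hj, h'.1 hj]
    · rw [h.2.1 hj, h'.2.1 hj]
    · rw [h.2.2.1 hj, h'.2.2.1 hj]

end IsInflation3142

theorem exists_isInflation3142 (hn : 3 ≤ n) (h0 : (π ⟨0, by omega⟩ : ℕ) = 2)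
    (h1 : (π ⟨1, by omega⟩ : ℕ) = 0) (hl : (π ⟨n - 1, by omega⟩ : ℕ) = 1) :
    ∃ σ : Perm (Fin (n - 3)), IsInflation3142 π σ := by
  obtain ⟨σ, hσ⟩ := exists_hasBlock (c := 2) (r := 3) (m := n - 3) π (by omega) (by omega)
    fun j hj => by
      have := val_apply_ne_val_apply π (a := j) (b := ⟨0, by omega⟩)
      have := val_apply_ne_val_apply π (a := j) (b := ⟨1, by omega⟩)
      have := val_apply_ne_val_apply π (a := j) (b := ⟨n - 1, by omega⟩)
      simp only [h0, h1, hl] at *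
      omega
  exact ⟨σ, fun _ => h0, fun _ => h1, fun _ => hl, hσ⟩

theorem existsUnique_isInflation3142 (σ : Perm (Fin m)) :
    ∃! π : Perm (Fin (m + 3)), IsInflation3142 π σ := by
  -- `3142[1,1,σ,1]` is `21 ⊕ (σ ⊖ 1)` with the values `1` and `2` exchanged
  obtain ⟨τ, hτ, -⟩ := existsUnique_isSkewSumOne σ
  obtain ⟨π, hπ, -⟩ := existsUnique_isTwoOneDirectSum τ
  have hτl : (τ ⟨m, by omega⟩ : ℕ) = 0 := hτ.1 (by omega)
  have hlast : π ⟨m + 2, by omega⟩ = ⟨2, by omega⟩ :=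
    Fin.ext (by rw [hπ.2.2.apply_eq (i := ⟨m, by omega⟩) rfl, hτl])
  have hπ' : IsInflation3142 (swap ⟨1, by omega⟩ ⟨2, by omega⟩ * π) σ := by
    refine ⟨fun h => ?_, fun h => ?_, fun _ => ?_,
      (hπ.2.2.trans hτ.2 (by omega)).mul_left (d := 0) _ fun v hv _ => ?_⟩
    · rw [Perm.mul_apply, show π ⟨0, h⟩ = ⟨1, by omega⟩ from Fin.ext (hπ.1 h), swap_apply_left]
    · rw [Perm.mul_apply, show π ⟨1, h⟩ = ⟨0, by omega⟩ from Fin.ext (hπ.2.1 h),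
        swap_apply_of_ne_of_ne (by simp) (by simp)]
    · show ((swap (⟨1, by omega⟩ : Fin (m + 3)) ⟨2, by omega⟩ * π) ⟨m + 2, by omega⟩ : ℕ) = 1
      rw [Perm.mul_apply, hlast, swap_apply_right]
    · rw [swap_apply_of_ne_of_ne (x := v) (Fin.ne_of_val_ne (by dsimp only; omega))
        (Fin.ne_of_val_ne (by dsimp only; omega)), add_zero]
  exact ⟨_, hπ', fun _ h => h.eq hπ' rfl⟩

theorem GapIncreasing.val_apply_zero_eq_zero_or (hπ : GapIncreasing 0 π) (hn : 2 ≤ n) :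
    (π ⟨0, by omega⟩ : ℕ) = 0 ∨ (π ⟨0, by omega⟩ : ℕ) = 1 ∧ (π ⟨1, by omega⟩ : ℕ) = 0 := by
  have hv (v : ℕ) (hv : v < n) :
      (π ⟨0, by omega⟩ : ℕ) < v ∨ v = π ⟨0, by omega⟩ ∨ v = π ⟨1, by omega⟩ := by
    obtain ⟨⟨p, hp⟩, e⟩ := π.surjective ⟨v, hv⟩
    rw [← show (π ⟨p, hp⟩ : ℕ) = v from congrArg Fin.val e]
    rcases (by omega : p = 0 ∨ p = 1 ∨ 2 ≤ p) with rfl | rfl | hp2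
    · exact Or.inr (Or.inl rfl)
    · exact Or.inr (Or.inr rfl)
    · exact Or.inl (hπ ⟨0, by omega⟩ ⟨p, hp⟩ hp2 hp)
  have := val_apply_ne_val_apply π (a := ⟨0, by omega⟩) (b := ⟨1, by omega⟩) (by simp)
  have := hv 0 (by omega)
  have := hv 1 (by omega)
  omega

theorem GapIncreasing.val_apply_cases_of_four_le (hπ : GapIncreasing 1 π) (hn : 4 ≤ n) :
    (π ⟨0, by omega⟩ : ℕ) = 0 ∨
    (π ⟨0, by omega⟩ : ℕ) = 1 ∧ (π ⟨1, by omega⟩ : ℕ) = 0 ∨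
    (π ⟨n - 1, by omega⟩ : ℕ) = 0 ∨
    (π ⟨0, by omega⟩ : ℕ) = 2 ∧ (π ⟨1, by omega⟩ : ℕ) = 0 ∧ (π ⟨n - 1, by omega⟩ : ℕ) = 1 := by
  have hv (v : ℕ) (hv : v < n) : (π ⟨0, by omega⟩ : ℕ) < v ∨ v = π ⟨0, by omega⟩ ∨
      v = π ⟨1, by omega⟩ ∨ v = π ⟨n - 1, by omega⟩ := by
    obtain ⟨⟨p, hp⟩, e⟩ := π.surjective ⟨v, hv⟩
    rw [← show (π ⟨p, hp⟩ : ℕ) = v from congrArg Fin.val e]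
    rcases (by omega : p = 0 ∨ p = 1 ∨ p = n - 1 ∨ 2 ≤ p ∧ p + 1 < n) with rfl | rfl | rfl | hp2
    · exact Or.inr (Or.inl rfl)
    · exact Or.inr (Or.inr (Or.inl rfl))
    · exact Or.inr (Or.inr (Or.inr rfl))
    · exact Or.inl (hπ ⟨0, by omega⟩ ⟨p, hp⟩ hp2.1 hp2.2)
  have := val_apply_ne_val_apply π (a := ⟨0, by omega⟩) (b := ⟨1, by omega⟩) (by simp)
  have := val_apply_ne_val_apply π (a := ⟨0, by omega⟩) (b := ⟨n - 1, by omega⟩)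
    (by dsimp only; omega)
  have := val_apply_ne_val_apply π (a := ⟨1, by omega⟩) (b := ⟨n - 1, by omega⟩)
    (by dsimp only; omega)
  have := hv 0 (by omega)
  have := hv 1 (by omega)
  have := hv 2 (by omega)
  omega

theorem avoidsP3_iff_exists_isOneDirectSum_or (π : Perm (Fin (m + 2))) :
    AvoidsP3 π ↔ (∃ σ : Perm (Fin (m + 1)), AvoidsP3 σ ∧ IsOneDirectSum π σ) ∨
      ∃ σ : Perm (Fin m), AvoidsP3 σ ∧ IsTwoOneDirectSum π σ := by
  simp only [avoidsP3_iff_gapIncreasing]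
  constructor
  · intro hπ
    rcases hπ.val_apply_zero_eq_zero_or (by omega) with h0 | ⟨h0, h1⟩
    · obtain ⟨σ, hσ⟩ := exists_isOneDirectSum (by omega) h0
      exact Or.inl ⟨σ, (hσ.gapIncreasing_iff rfl).1 hπ, hσ⟩
    · obtain ⟨σ, hσ⟩ := exists_isTwoOneDirectSum (by omega) h0 h1
      exact Or.inr ⟨σ, (hσ.gapIncreasing_iff rfl).1 hπ, hσ⟩
  · rintro (⟨σ, hσ, h⟩ | ⟨σ, hσ, h⟩)
    · exact (h.gapIncreasing_iff rfl).2 hσ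
    · exact (h.gapIncreasing_iff rfl).2 hσ

theorem avoidsP4_iff_inA_or_inB_or_inC_or_inD (hn : 4 ≤ n) (π : Perm (Fin n)) :
    AvoidsP4 π ↔ InA n π ∨ InB n π ∨ InC n π ∨ InD n π := by
  simp only [InA, InB, InC, InD, avoidsP4_iff_gapIncreasing, avoidsP3_iff_gapIncreasing]
  constructor
  · intro hπ
    rcases hπ.val_apply_cases_of_four_le hn with h0 | ⟨h0, h1⟩ | hl | ⟨h0, h1, hl⟩
    · obtain ⟨σ, hσ⟩ := exists_isOneDirectSum (by omega) h0
      exact Or.inl ⟨σ, (hσ.gapIncreasing_iff (by omega)).1 hπ, hσ⟩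
    · obtain ⟨σ, hσ⟩ := exists_isTwoOneDirectSum (by omega) h0 h1
      exact Or.inr (Or.inl ⟨σ, (hσ.gapIncreasing_iff (by omega)).1 hπ, hσ⟩)
    · obtain ⟨σ, hσ⟩ := exists_isSkewSumOne (by omega) hl
      exact Or.inr (Or.inr (Or.inl ⟨σ, (hσ.gapIncreasing_iff (by omega)).1 hπ, hσ⟩))
    · obtain ⟨σ, hσ⟩ := exists_isInflation3142 (by omega) h0 h1 hl
      exact Or.inr (Or.inr (Or.inr ⟨σ, (hσ.gapIncreasing_iff (by omega)).1 hπ, hσ⟩))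
  · rintro (⟨σ, hσ, h⟩ | ⟨σ, hσ, h⟩ | ⟨σ, hσ, h⟩ | ⟨σ, hσ, h⟩)
    · exact (IsOneDirectSum.gapIncreasing_iff h (by omega)).2 hσ
    · exact (IsTwoOneDirectSum.gapIncreasing_iff h (by omega)).2 hσ
    · exact (IsSkewSumOne.gapIncreasing_iff h (by omega)).2 hσ
    · exact (IsInflation3142.gapIncreasing_iff h (by omega)).2 hσ

section Disjoint

variable (π)

theorem not_inA_and_inB (hn : 0 < n) : ¬ (InA n π ∧ InB n π) :=
  fun ⟨⟨_, _, hA⟩, ⟨_, _, hB⟩⟩ => by have := hA.1 hn; have := hB.1 hn; omega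

theorem not_inA_and_inC (hn : 1 < n) : ¬ (InA n π ∧ InC n π) :=
  fun ⟨⟨_, _, hA⟩, ⟨_, _, hC⟩⟩ => by
    have := hA.1 (by omega)
    have := hC.2 ⟨0, by omega⟩ (by omega)
    dsimp only at this
    omega

theorem not_inA_and_inD (hn : 0 < n) : ¬ (InA n π ∧ InD n π) :=
  fun ⟨⟨_, _, hA⟩, ⟨_, _, hD⟩⟩ => by have := hA.1 hn; have := hD.1 hn; omega

theorem not_inB_and_inC (hn : 2 < n) : ¬ (InB n π ∧ InC n π) :=
  fun ⟨⟨_, _, hB⟩, ⟨_, _, hC⟩⟩ => by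
    have := hB.2.1 (by omega)
    have := hC.2 ⟨1, by omega⟩ (by omega)
    dsimp only at this
    omega

theorem not_inB_and_inD (hn : 0 < n) : ¬ (InB n π ∧ InD n π) :=
  fun ⟨⟨_, _, hB⟩, ⟨_, _, hD⟩⟩ => by have := hB.1 hn; have := hD.1 hn; omega

theorem not_inC_and_inD (hn : 0 < n) : ¬ (InC n π ∧ InD n π) :=
  fun ⟨⟨_, _, hC⟩, ⟨_, _, hD⟩⟩ => by have := hC.1 (by omega); have := hD.2.2.1 (by omega); omega

end Disjoint

theorem Nat.card_subtype_or_of_disjoint {α : Type*} [Finite α] {p q : α → Prop}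
    (h : ∀ x, p x → ¬ q x) :
    Nat.card {x // p x ∨ q x} = Nat.card {x // p x} + Nat.card {x // q x} := by
  classical
  rw [Nat.card_congr (subtypeOrEquiv p q fun _ hp hq x hx => h x (hp x hx) (hq x hx)),
    Nat.card_sum]

theorem Nat.card_subtype_exists_and {α β : Type*} (P : α → Prop) {E : β → α → Prop}
    (hE : ∀ b a a', E b a → E b a' → a = a') (hex : ∀ a, ∃! b, E b a) :
    Nat.card {b // ∃ a, P a ∧ E b a} = Nat.card {a // P a} := by
  choose f hf using fun a => (hex a).exists
  have hinj : f.Injective := fun a a' h => hE _ _ _ (hf a) (h ▸ hf a')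
  calc Nat.card {b // ∃ a, P a ∧ E b a} = Nat.card (f '' {a | P a}) :=
        Nat.card_congr <| Equiv.subtypeEquivRight fun b => exists_congr fun a =>
          and_congr_right fun _ => ⟨fun h => (hex a).unique (hf a) h, fun h => h ▸ hf a⟩
    _ = Nat.card {a // P a} := Nat.card_image_of_injective hinj _

theorem card_exists_isOneDirectSum (P : Perm (Fin m) → Prop) :
    Nat.card {π : Perm (Fin (m + 1)) // ∃ σ, P σ ∧ IsOneDirectSum π σ} = Nat.card {σ // P σ} :=
  Nat.card_subtype_exists_and P (fun _ _ _ h h' => h.2.unique h'.2 (by omega))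
    existsUnique_isOneDirectSum

theorem card_exists_isTwoOneDirectSum (P : Perm (Fin m) → Prop) :
    Nat.card {π : Perm (Fin (m + 2)) // ∃ σ, P σ ∧ IsTwoOneDirectSum π σ} =
      Nat.card {σ // P σ} :=
  Nat.card_subtype_exists_and P (fun _ _ _ h h' => h.2.2.unique h'.2.2 (by omega))
    existsUnique_isTwoOneDirectSum

theorem card_exists_isSkewSumOne (P : Perm (Fin m) → Prop) :
    Nat.card {π : Perm (Fin (m + 1)) // ∃ σ, P σ ∧ IsSkewSumOne π σ} = Nat.card {σ // P σ} :=
  Nat.card_subtype_exists_and P (fun _ _ _ h h' => h.2.unique h'.2 (by omega))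
    existsUnique_isSkewSumOne

theorem card_exists_isInflation3142 (P : Perm (Fin m) → Prop) :
    Nat.card {π : Perm (Fin (m + 3)) // ∃ σ, P σ ∧ IsInflation3142 π σ} = Nat.card {σ // P σ} :=
  Nat.card_subtype_exists_and P (fun _ _ _ h h' => h.2.2.2.unique h'.2.2.2 (by omega))
    existsUnique_isInflation3142

theorem card_subtype_perm_of_forall {P : Perm (Fin n) → Prop} (h : ∀ π, P π) :
    Nat.card {π // P π} = n.factorial := by
  rw [Nat.card_congr (Equiv.subtypeUnivEquiv h), Nat.card_perm, Nat.card_fin]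

theorem card_avoidsP3 (m : ℕ) : Nat.card {π : Perm (Fin m) // AvoidsP3 π} = Nat.fib (m + 1) := by
  induction m using Nat.strong_induction_on with
  | _ m ih =>
    by_cases hm : m ≤ 1
    · rw [card_subtype_perm_of_forall (n := m) fun π =>
        (avoidsP3_iff_gapIncreasing π).2 (gapIncreasing_of_le (by omega) π)]
      interval_cases m <;> rfl
    obtain ⟨k, rfl⟩ := Nat.exists_eq_add_of_le' (by omega : 2 ≤ m)
    calc Nat.card {π : Perm (Fin (k + 2)) // AvoidsP3 π}
        = Nat.card {π // (∃ σ : Perm (Fin (k + 1)), AvoidsP3 σ ∧ IsOneDirectSum π σ) ∨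
            ∃ σ : Perm (Fin k), AvoidsP3 σ ∧ IsTwoOneDirectSum π σ} :=
          Nat.card_congr (Equiv.subtypeEquivRight avoidsP3_iff_exists_isOneDirectSum_or)
      _ = Nat.fib (k + 2) + Nat.fib (k + 1) := by
          rw [Nat.card_subtype_or_of_disjoint fun π ⟨_, _, hA⟩ ⟨_, _, hB⟩ => by
              have := hA.1 (by omega); have := hB.1 (by omega); omega,
            card_exists_isOneDirectSum, card_exists_isTwoOneDirectSum, ih _ (by omega),
            ih _ (by omega)]
      _ = Nat.fib (k + 2 + 1) := by rw [Nat.fib_add_two (n := k + 1), add_comm]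

theorem card_inA (hn : 1 ≤ n) :
    Nat.card {π : Perm (Fin n) // InA n π} = Nat.card {σ : Perm (Fin (n - 1)) // AvoidsP4 σ} := by
  obtain ⟨m, rfl⟩ := Nat.exists_eq_add_of_le' hn
  exact card_exists_isOneDirectSum AvoidsP4

theorem card_inB (hn : 2 ≤ n) :
    Nat.card {π : Perm (Fin n) // InB n π} = Nat.card {σ : Perm (Fin (n - 2)) // AvoidsP4 σ} := by
  obtain ⟨m, rfl⟩ := Nat.exists_eq_add_of_le' hn
  exact card_exists_isTwoOneDirectSum AvoidsP4

theorem card_inC (hn : 1 ≤ n) :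
    Nat.card {π : Perm (Fin n) // InC n π} = Nat.card {σ : Perm (Fin (n - 1)) // AvoidsP3 σ} := by
  obtain ⟨m, rfl⟩ := Nat.exists_eq_add_of_le' hn
  exact card_exists_isSkewSumOne AvoidsP3

theorem card_inD (hn : 3 ≤ n) :
    Nat.card {π : Perm (Fin n) // InD n π} = Nat.card {σ : Perm (Fin (n - 3)) // AvoidsP3 σ} := by
  obtain ⟨m, rfl⟩ := Nat.exists_eq_add_of_le' hn
  exact card_exists_isInflation3142 AvoidsP3

theorem card_avoidsP4_eq_add (hn : 4 ≤ n) :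
    Nat.card {π : Perm (Fin n) // AvoidsP4 π} =
      Nat.card {σ : Perm (Fin (n - 1)) // AvoidsP4 σ} +
        (Nat.card {σ : Perm (Fin (n - 2)) // AvoidsP4 σ} +
          (Nat.card {σ : Perm (Fin (n - 1)) // AvoidsP3 σ} +
            Nat.card {σ : Perm (Fin (n - 3)) // AvoidsP3 σ})) := by
  rw [Nat.card_congr (Equiv.subtypeEquivRight (avoidsP4_iff_inA_or_inB_or_inC_or_inD hn)),
    Nat.card_subtype_or_of_disjoint fun π hA h => by
      rcases h with hB | hC | hD
      exacts [not_inA_and_inB π (by omega) ⟨hA, hB⟩, not_inA_and_inC π (by omega) ⟨hA, hC⟩,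
        not_inA_and_inD π (by omega) ⟨hA, hD⟩],
    Nat.card_subtype_or_of_disjoint fun π hB h => by
      rcases h with hC | hD
      exacts [not_inB_and_inC π (by omega) ⟨hB, hC⟩, not_inB_and_inD π (by omega) ⟨hB, hD⟩],
    Nat.card_subtype_or_of_disjoint fun π hC hD => not_inC_and_inD π (by omega) ⟨hC, hD⟩,
    card_inA (by omega), card_inB (by omega), card_inC (by omega), card_inD (by omega)]

theorem card_avoidsP4 (n : ℕ) (hn : 1 ≤ n) :
    Nat.card {π : Perm (Fin n) // AvoidsP4 π} = n * Nat.fib n := by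
  induction n using Nat.strong_induction_on with
  | _ n ih =>
    by_cases hn3 : n ≤ 3
    · rw [card_subtype_perm_of_forall (n := n) fun π =>
        (avoidsP4_iff_gapIncreasing π).2 (gapIncreasing_of_le (by omega) π)]
      interval_cases n <;> rfl
    rw [card_avoidsP4_eq_add (by omega), ih _ (by omega) (by omega), ih _ (by omega) (by omega),
      card_avoidsP3, card_avoidsP3]
    obtain ⟨k, rfl⟩ := Nat.exists_eq_add_of_le' (by omega : 3 ≤ n)
    simp only [Nat.add_sub_cancel, show k + 3 - 1 = k + 2 from rfl, show k + 3 - 2 = k + 1 from rfl]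
    rw [Nat.fib_add_two (n := k + 1), Nat.fib_add_two (n := k)]
    ring

/-- `|Av_n(P_4)| = n·F(n)`, and for `n ≥ 4` the set `Av_n(P_4)` is the disjoint union
of `{1 ⊕ σ : σ ∈ Av_{n-1}(P_4)}`, `{21 ⊕ σ : σ ∈ Av_{n-2}(P_4)}`,
`{σ ⊖ 1 : σ ∈ Av_{n-1}(P_3)}` and `{3142[1,1,σ,1] : σ ∈ Av_{n-3}(P_3)}`. -/
theorem stmt_12 :
    (∀ n : ℕ, 1 ≤ n → Nat.card {π : Equiv.Perm (Fin n) // AvoidsP4 π} = n * Nat.fib n) ∧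
    ∀ n : ℕ, 4 ≤ n →
      (∀ π : Equiv.Perm (Fin n), AvoidsP4 π ↔ (InA n π ∨ InB n π ∨ InC n π ∨ InD n π)) ∧
      (∀ π : Equiv.Perm (Fin n), ¬ (InA n π ∧ InB n π)) ∧
      (∀ π : Equiv.Perm (Fin n), ¬ (InA n π ∧ InC n π)) ∧
      (∀ π : Equiv.Perm (Fin n), ¬ (InA n π ∧ InD n π)) ∧
      (∀ π : Equiv.Perm (Fin n), ¬ (InB n π ∧ InC n π)) ∧
      (∀ π : Equiv.Perm (Fin n), ¬ (InB n π ∧ InD n π)) ∧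
      (∀ π : Equiv.Perm (Fin n), ¬ (InC n π ∧ InD n π)) :=
  ⟨card_avoidsP4, fun _ hn => ⟨avoidsP4_iff_inA_or_inB_or_inC_or_inD hn,
    fun π => not_inA_and_inB π (by omega), fun π => not_inA_and_inC π (by omega),
    fun π => not_inA_and_inD π (by omega), fun π => not_inB_and_inC π (by omega),
    fun π => not_inB_and_inD π (by omega), fun π => not_inC_and_inD π (by omega)⟩⟩
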